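/- Let β ∈ ℝ and t ∈ ℝ with t ≠ 0. The diagonal point (t, t, t) is a critical point of V_β (i.e. ∇V_β(t,t,t) = 0) if and only if 15t² + 6√2 β t − 6(1−β²) = 0. Consequently, for 0 ≤ β ≤ √5/2, both points (ā, ā, ā) with ā = −(√2/5)(β ± √(5−4β²)) are critical points of V_β, and for β > √5/2 ≥ 0 there is no nonzero diagonal critical point. -/

import Mathlib

/-- The Lyapunov function `V_β` of the amplitude ODE system. -/
noncomputable def V (β a b c : ℝ) : ℝ :=
  -3 * (1 - β ^ 2) * (a ^ 2 + b ^ 2 + c ^ 2) + 6 * Real.sqrt 2 * β * (a * b * c)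
    + 3 * (a ^ 2 * b ^ 2 + b ^ 2 * c ^ 2 + a ^ 2 * c ^ 2)
    + 3 / 4 * (a ^ 4 + b ^ 4 + c ^ 4)

/-- Partial derivative of a function of three real variables in the first variable. -/
noncomputable def pA (f : ℝ → ℝ → ℝ → ℝ) (a b c : ℝ) : ℝ := deriv (fun t => f t b c) a

/-- Partial derivative in the second variable. -/
noncomputable def pB (f : ℝ → ℝ → ℝ → ℝ) (a b c : ℝ) : ℝ := deriv (fun t => f a t c) b

/-- Partial derivative in the third variable. -/
noncomputable def pC (f : ℝ → ℝ → ℝ → ℝ) (a b c : ℝ) : ℝ := deriv (fun t => f a b t) c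

/-- The gradient `∇V_β`. -/
noncomputable def gradV (β a b c : ℝ) : ℝ × ℝ × ℝ :=
  (pA (V β) a b c, pB (V β) a b c, pC (V β) a b c)

/-!
`V_β` is invariant under permuting its arguments, so on the diagonal all three partial
derivatives coincide, and the first one is `t · (15t² + 6√2 β t − 6(1 − β²))`. The quadratic
factor has discriminant `72 (5 − 4β²)`, which is nonnegative exactly when `|β| ≤ √5/2`; the
quadratic formula then gives the two amplitudes `ā`, and for larger `β` it has no real root.
-/

open Real

lemma hasDerivAt_biquadratic_add_linear (α p q r x : ℝ) :
    HasDerivAt (fun t => α * t ^ 4 + p * t ^ 2 + q * t + r)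
      (4 * α * x ^ 3 + 2 * p * x + q) x := by
  refine ((((hasDerivAt_pow 4 x).const_mul α).add ((hasDerivAt_pow 2 x).const_mul p)).add
    ((hasDerivAt_id' x).const_mul q)).add_const r |>.congr_deriv ?_
  push_cast
  ring

lemma pA_V (β a b c : ℝ) :
    pA (V β) a b c =
      -6 * (1 - β ^ 2) * a + 6 * √2 * β * (b * c) + 6 * a * (b ^ 2 + c ^ 2) + 3 * a ^ 3 := by
  have hV : (fun t => V β t b c) = fun t =>
      3 / 4 * t ^ 4 + (3 * (b ^ 2 + c ^ 2) - 3 * (1 - β ^ 2)) * t ^ 2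
        + 6 * √2 * β * (b * c) * t + V β 0 b c := by
    ext t; unfold V; ring
  rw [pA, hV, (hasDerivAt_biquadratic_add_linear _ _ _ _ a).deriv]
  ring

lemma V_swap₁₂ (β a b c : ℝ) : V β a b c = V β b a c := by unfold V; ring

lemma V_swap₁₃ (β a b c : ℝ) : V β a b c = V β c b a := by unfold V; ring

lemma pB_V (β a b c : ℝ) : pB (V β) a b c = pA (V β) b a c := by
  unfold pB pA
  simp_rw [V_swap₁₂ β a]

lemma pC_V (β a b c : ℝ) : pC (V β) a b c = pA (V β) c b a := by
  unfold pC pA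
  simp_rw [V_swap₁₃ β a]

lemma gradV_diag_eq_zero_iff (β t : ℝ) :
    gradV β t t t = 0 ↔ t * (15 * t ^ 2 + 6 * √2 * β * t - 6 * (1 - β ^ 2)) = 0 := by
  have hpA : pA (V β) t t t = t * (15 * t ^ 2 + 6 * √2 * β * t - 6 * (1 - β ^ 2)) := by
    rw [pA_V]; ring
  simp only [gradV, pB_V, pC_V, hpA, Prod.mk_eq_zero, and_self]

lemma discrim_diagonal_quadratic (β : ℝ) :
    discrim 15 (6 * √2 * β) (-6 * (1 - β ^ 2)) = 72 * (5 - 4 * β ^ 2) := by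
  have h2 : √2 ^ 2 = 2 := sq_sqrt (by norm_num)
  unfold discrim; linear_combination 36 * β ^ 2 * h2

lemma diagonal_quadratic_eq_zero_iff {β : ℝ} (hβ : 4 * β ^ 2 ≤ 5) (t : ℝ) :
    15 * t ^ 2 + 6 * √2 * β * t - 6 * (1 - β ^ 2) = 0 ↔
      t = -(√2 / 5) * (β + √(5 - 4 * β ^ 2)) ∨ t = -(√2 / 5) * (β - √(5 - 4 * β ^ 2)) := by
  set r := √(5 - 4 * β ^ 2) with hr
  have hdiscrim : discrim 15 (6 * √2 * β) (-6 * (1 - β ^ 2)) = (6 * √2 * r) * (6 * √2 * r) := by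
    rw [discrim_diagonal_quadratic, ← sq, mul_pow, mul_pow, sq_sqrt (by norm_num), hr,
      sq_sqrt (by linarith)]
    ring
  have hquad : 15 * t ^ 2 + 6 * √2 * β * t - 6 * (1 - β ^ 2)
      = 15 * (t * t) + 6 * √2 * β * t + -6 * (1 - β ^ 2) := by ring
  have hroot_plus : (-(6 * √2 * β) + 6 * √2 * r) / (2 * 15) = -(√2 / 5) * (β - r) := by ring
  have hroot_minus : (-(6 * √2 * β) - 6 * √2 * r) / (2 * 15) = -(√2 / 5) * (β + r) := by ring
  rw [hquad, quadratic_eq_zero_iff (by norm_num) hdiscrim, hroot_plus, hroot_minus, or_comm]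

lemma diagonal_quadratic_ne_zero {β : ℝ} (hβ : 5 < 4 * β ^ 2) (t : ℝ) :
    15 * t ^ 2 + 6 * √2 * β * t - 6 * (1 - β ^ 2) ≠ 0 := by
  have hneg : ∀ s : ℝ, discrim 15 (6 * √2 * β) (-6 * (1 - β ^ 2)) ≠ s ^ 2 := fun s => by
    rw [discrim_diagonal_quadratic]
    nlinarith [sq_nonneg s]
  convert quadratic_ne_zero_of_discrim_ne_sq hneg t using 1
  ring

/-- A nonzero diagonal point `(t,t,t)` is a critical point of `V_β` iff
`15 t² + 6√2 β t - 6(1 - β²) = 0`.  Consequently, for `0 ≤ β ≤ √5/2` both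
points `(ā,ā,ā)` with `ā = -(√2/5)(β ± √(5 - 4β²))` are critical points, while
for `β > √5/2` there is no nonzero diagonal critical point. -/
theorem diagonal_critical_points (β : ℝ) :
    (∀ t : ℝ, t ≠ 0 →
      (gradV β t t t = 0 ↔
        15 * t ^ 2 + 6 * Real.sqrt 2 * β * t - 6 * (1 - β ^ 2) = 0)) ∧
    (0 ≤ β → β ≤ Real.sqrt 5 / 2 →
      gradV β (-(Real.sqrt 2 / 5) * (β + Real.sqrt (5 - 4 * β ^ 2)))
        (-(Real.sqrt 2 / 5) * (β + Real.sqrt (5 - 4 * β ^ 2)))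
        (-(Real.sqrt 2 / 5) * (β + Real.sqrt (5 - 4 * β ^ 2))) = 0 ∧
      gradV β (-(Real.sqrt 2 / 5) * (β - Real.sqrt (5 - 4 * β ^ 2)))
        (-(Real.sqrt 2 / 5) * (β - Real.sqrt (5 - 4 * β ^ 2)))
        (-(Real.sqrt 2 / 5) * (β - Real.sqrt (5 - 4 * β ^ 2))) = 0) ∧
    (Real.sqrt 5 / 2 < β → ∀ t : ℝ, t ≠ 0 → gradV β t t t ≠ 0) := by
  refine ⟨fun t ht => ?_, fun hβ₀ hβ => ?_, fun hβ t ht => ?_⟩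
  · rw [gradV_diag_eq_zero_iff, mul_eq_zero, or_iff_right ht]
  · have hβ' : 4 * β ^ 2 ≤ 5 := by
      have := (le_sqrt (by linarith) (by norm_num)).mp (show 2 * β ≤ √5 by linarith)
      linarith
    have critical_of_root : ∀ t, (t = -(√2 / 5) * (β + √(5 - 4 * β ^ 2)) ∨
        t = -(√2 / 5) * (β - √(5 - 4 * β ^ 2))) → gradV β t t t = 0 := fun t ht =>
      (gradV_diag_eq_zero_iff β t).mpr
        (mul_eq_zero_of_right t ((diagonal_quadratic_eq_zero_iff hβ' t).mpr ht))
    exact ⟨critical_of_root _ (Or.inl rfl), critical_of_root _ (Or.inr rfl)⟩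
  · have hβ' : 5 < 4 * β ^ 2 := by
      have := (sqrt_lt' (by linarith [sqrt_nonneg 5])).mp (show √5 < 2 * β by linarith)
      linarith
    rw [Ne, gradV_diag_eq_zero_iff, mul_eq_zero, or_iff_right ht]
    exact diagonal_quadratic_ne_zero hβ' t
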